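/- Over a field K, consider the polynomial map β̂ : K^{2n} → K^{n(n−1)/2} sending (s_1,…,s_n,t_1,…,t_n) to the point with coordinates x_{1j} = s_1 t_j + s_j t_1 (j ≥ 2) and x_{ij} = s_i t_j (1 < i < j ≤ n). Then every point in the image of β̂ satisfies all 2×2 minors det of the submatrices Ω_{{i,j},{k,ℓ}} with 1 < i < j < k < ℓ ≤ n and all 3×3 minors of Ω_{{1,i_2,i_3},{j_1,j_2,j_3}} with 1 < i_2 < j_1 < j_2 < j_3 < i_3 ≤ n, where Ω is the skew-symmetric matrix with (i,j) entry x_{ij} for i < j. -/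

import Mathlib

/-!
The point `x = β̂(s, t)` is built from the two vectors `s` and `t`. Off the first row,
`x_{ij} = s_i t_j` is a rank-one pattern, so its 2×2 minors vanish. In the 3×3 minor each of
the three rows is a combination of `(t_{j₁}, t_{j₂}, t_{j₃})` and `(s_{j₁}, s_{j₂}, s_{j₃})`
(the row of `1` because `x_{1j} = s_1 t_j + t_1 s_j`), so the matrix has rank at most two.
-/

namespace Matrix

variable {m n R : Type*} [Fintype m] [Fintype n] [DecidableEq n] [CommRing R] [IsDomain R]

theorem det_mul_eq_zero_of_card_lt (A : Matrix n m R) (B : Matrix m n R)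
    (h : Fintype.card m < Fintype.card n) : (A * B).det = 0 := by
  by_contra hdet
  have hrank := rank_of_det_mem_nonZeroDivisors (mem_nonZeroDivisors_of_ne_zero hdet)
  have := (rank_mul_le_right A B).trans (rank_le_card_height B)
  omega

theorem det_vecMulVec_add_vecMulVec (h : 2 < Fintype.card n) (a b u v : n → R) :
    (vecMulVec a u + vecMulVec b v).det = 0 := by
  have hfactor : vecMulVec a u + vecMulVec b v = of (fun i k => ![a i, b i] k) * of ![u, v] := by
    ext i j
    simp [mul_apply, vecMulVec_apply, Fin.sum_univ_two]
  rw [hfactor]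
  exact det_mul_eq_zero_of_card_lt _ _ (by simpa using h)

end Matrix

open Matrix in
/-- Over a field `K`, define the point with coordinates `x_{1j} = s_1 t_j + s_j t_1`
(for `j ≥ 2`) and `x_{ij} = s_i t_j` (for `1 < i < j ≤ n`).  Every such point (i.e.,
every point in the image of the map `β̂ : K^{2n} → K^{n(n−1)/2}`) satisfies all the
2×2 minors `det Ω_{{i,j},{k,ℓ}}` with `1 < i < j < k < ℓ ≤ n` and all the 3×3 minors
`det Ω_{{1,i₂,i₃},{j₁,j₂,j₃}}` with `1 < i₂ < j₁ < j₂ < j₃ < i₃ ≤ n`, where `Ω` is the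
skew-symmetric matrix with `(i,j)` entry `x_{ij}` for `i < j`. -/
theorem image_satisfies_minors {K : Type*} [Field K] (n : ℕ) (s t : ℕ → K)
    (x : ℕ → ℕ → K)
    (hx1 : ∀ j, 1 < j → j ≤ n → x 1 j = s 1 * t j + s j * t 1)
    (hx : ∀ i j, 1 < i → i < j → j ≤ n → x i j = s i * t j) :
    (∀ i j k ℓ, 1 < i → i < j → j < k → k < ℓ → ℓ ≤ n →
      Matrix.det !![x i k, x i ℓ; x j k, x j ℓ] = 0) ∧
    (∀ i₂ j₁ j₂ j₃ i₃, 1 < i₂ → i₂ < j₁ → j₁ < j₂ → j₂ < j₃ → j₃ < i₃ → i₃ ≤ n →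
      Matrix.det !![x 1 j₁, x 1 j₂, x 1 j₃;
                    x i₂ j₁, x i₂ j₂, x i₂ j₃;
                    -(x j₁ i₃), -(x j₂ i₃), -(x j₃ i₃)] = 0) := by
  constructor
  · intro i j k ℓ _ _ _ _ _
    have hrankOne : !![x i k, x i ℓ; x j k, x j ℓ] = vecMulVec ![s i, s j] ![t k, t ℓ] := by
      ext a b
      fin_cases a <;> fin_cases b <;> simp (disch := omega) [vecMulVec_apply, hx]
    rw [hrankOne]
    exact det_vecMulVec _ _
  · intro i₂ j₁ j₂ j₃ i₃ _ _ _ _ _ _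
    have hrankTwo : !![x 1 j₁, x 1 j₂, x 1 j₃; x i₂ j₁, x i₂ j₂, x i₂ j₃;
          -(x j₁ i₃), -(x j₂ i₃), -(x j₃ i₃)] =
        vecMulVec ![s 1, s i₂, 0] ![t j₁, t j₂, t j₃] +
          vecMulVec ![t 1, 0, -t i₃] ![s j₁, s j₂, s j₃] := by
      ext a b
      fin_cases a <;> fin_cases b <;> simp (disch := omega) [hx, hx1, mul_comm]
    rw [hrankTwo]
    exact det_vecMulVec_add_vecMulVec (by simp) _ _ _ _
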